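/- arXiv:2603.01466 — 2 statements merged into one kernel-verified Lean document; each statement's English description precedes it below -/
import Mathlib

section
/- Let H be a complex Hilbert space, and let A₀, A₁, B₀, B₁, C₀, C₁ be self-adjoint bounded operators on H with -I ≤ Aᵢ ≤ I, -I ≤ Bᵢ ≤ I, -I ≤ Cᵢ ≤ I, such that the Aᵢ commute with the Bⱼ and Cⱼ, and the Bᵢ commute with the Cⱼ. Let τ be a state on B(H) satisfying τ(A·C) = τ(A)·τ(C) for all A in the von Neumann algebra generated by A₀,A₁ and C in the von Neumann algebra generated by C₀,C₁. Then √|τ((A₀+A₁)B₀(C₀+C₁))| + √|τ((A₀-A₁)B₁(C₀-C₁))| ≤ 2√2. -/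
/-!
Let `⟪x, y⟫ = τ (x⋆ y)` be the GNS semi-inner product of the state and `‖·‖` its seminorm.
For self-adjoint `a`, `τ (a b c) = ⟪a, b c⟫`, so Cauchy–Schwarz and `‖b c‖ ≤ ‖c‖` for a
contraction `b` give `|I_τ| ≤ ‖A₀ + A₁‖ ‖C₀ + C₁‖` and `|J_τ| ≤ ‖A₀ - A₁‖ ‖C₀ - C₁‖`. By AM–GM and the parallelogram
law `|I_τ| + |J_τ| ≤ 4`, and then `√|I_τ| + √|J_τ| ≤ √(2 (|I_τ| + |J_τ|)) ≤ 2√2`.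
-/

open scoped ComplexOrder InnerProductSpace

section StarOrderedRing

variable {R : Type*} [Ring R] [PartialOrder R] [StarRing R] [StarOrderedRing R]

lemma isSelfAdjoint_of_neg_one_le {a : R} (h : -1 ≤ a) : IsSelfAdjoint a := by
  simpa using (IsSelfAdjoint.of_nonneg (sub_nonneg.2 h)).sub (IsSelfAdjoint.one R)

end StarOrderedRing

lemma Real.sqrt_add_sqrt_le_sqrt_two_mul_add {x y : ℝ} (hx : 0 ≤ x) (hy : 0 ≤ y) :
    √x + √y ≤ √(2 * (x + y)) := by
  refine Real.le_sqrt_of_sq_le ?_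
  nlinarith [sq_nonneg (√x - √y), Real.sq_sqrt hx, Real.sq_sqrt hy]

lemma norm_add_mul_norm_add_add_norm_sub_mul_norm_sub_le_four {𝕜 E : Type*} [RCLike 𝕜]
    [SeminormedAddCommGroup E] [InnerProductSpace 𝕜 E] {x₀ x₁ y₀ y₁ : E}
    (hx₀ : ‖x₀‖ ≤ 1) (hx₁ : ‖x₁‖ ≤ 1) (hy₀ : ‖y₀‖ ≤ 1) (hy₁ : ‖y₁‖ ≤ 1) :
    ‖x₀ + x₁‖ * ‖y₀ + y₁‖ + ‖x₀ - x₁‖ * ‖y₀ - y₁‖ ≤ 4 := by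
  have hx := parallelogram_law_with_norm 𝕜 x₀ x₁
  have hy := parallelogram_law_with_norm 𝕜 y₀ y₁
  have hx₀' := pow_le_one₀ (n := 2) (norm_nonneg x₀) hx₀
  have hx₁' := pow_le_one₀ (n := 2) (norm_nonneg x₁) hx₁
  have hy₀' := pow_le_one₀ (n := 2) (norm_nonneg y₀) hy₀
  have hy₁' := pow_le_one₀ (n := 2) (norm_nonneg y₁) hy₁
  nlinarith [two_mul_le_add_sq ‖x₀ + x₁‖ ‖y₀ + y₁‖, two_mul_le_add_sq ‖x₀ - x₁‖ ‖y₀ - y₁‖]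

section CStarAlgebra

variable {A : Type*} [CStarAlgebra A] [PartialOrder A] [StarOrderedRing A]

lemma star_mul_self_le_one_of_neg_one_le_of_le_one {a : A} (h₁ : -1 ≤ a) (h₂ : a ≤ 1) :
    star a * a ≤ 1 := by
  have h : 0 ≤ (1 - a) * (1 + a) :=
    Commute.mul_nonneg (sub_nonneg.2 h₂) (neg_le_iff_add_nonneg'.1 h₁)
      ((Commute.one_right _).add_right ((Commute.one_left a).sub_left (Commute.refl a)))
  rw [(isSelfAdjoint_of_neg_one_le h₁).star_eq, ← sub_nonneg]
  simpa [mul_add, sub_mul] using h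

namespace PositiveLinearMap

variable (f : A →ₚ[ℂ] ℂ)

lemma norm_toPreGNS_sq (a : A) : ‖f.toPreGNS a‖ ^ 2 = (f (star a * a)).re := by
  rw [← Complex.ofReal_re (‖f.toPreGNS a‖ ^ 2), Complex.ofReal_pow, preGNS_norm_sq]
  rfl

lemma norm_toPreGNS_le_one (hf : f 1 = 1) {a : A} (ha : star a * a ≤ 1) :
    ‖f.toPreGNS a‖ ≤ 1 := by
  have h : f (star a * a) ≤ 1 := hf ▸ f.monotone' ha
  refine (sq_le_one_iff₀ (norm_nonneg _)).1 ?_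
  rw [norm_toPreGNS_sq]
  simpa using (Complex.le_def.1 h).1

lemma norm_toPreGNS_mul_le {b : A} (hb : star b * b ≤ 1) (c : A) :
    ‖f.toPreGNS (b * c)‖ ≤ ‖f.toPreGNS c‖ := by
  have h : star c * (star b * b) * c ≤ star c * 1 * c := star_left_conjugate_le_conjugate hb c
  have h' : f (star (b * c) * (b * c)) ≤ f (star c * c) := by
    simpa [mul_assoc] using f.monotone' h
  refine (sq_le_sq₀ (norm_nonneg _) (norm_nonneg _)).1 ?_
  rw [norm_toPreGNS_sq, norm_toPreGNS_sq]
  exact (Complex.le_def.1 h').1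

lemma norm_apply_star_mul_mul_le {b : A} (hb : star b * b ≤ 1) (a c : A) :
    ‖f (star a * b * c)‖ ≤ ‖f.toPreGNS a‖ * ‖f.toPreGNS c‖ := by
  rw [mul_assoc]
  calc ‖f (star a * (b * c))‖ = ‖⟪f.toPreGNS a, f.toPreGNS (b * c)⟫_ℂ‖ := rfl
    _ ≤ ‖f.toPreGNS a‖ * ‖f.toPreGNS (b * c)‖ := norm_inner_le_norm _ _
    _ ≤ ‖f.toPreGNS a‖ * ‖f.toPreGNS c‖ := by gcongr; exact f.norm_toPreGNS_mul_le hb c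

theorem norm_apply_add_mul_add_add_norm_apply_sub_mul_sub_le_four (hf : f 1 = 1)
    {a₀ a₁ b₀ b₁ c₀ c₁ : A} (ha₀ : IsSelfAdjoint a₀) (ha₁ : IsSelfAdjoint a₁)
    (ha₀' : star a₀ * a₀ ≤ 1) (ha₁' : star a₁ * a₁ ≤ 1)
    (hb₀ : star b₀ * b₀ ≤ 1) (hb₁ : star b₁ * b₁ ≤ 1)
    (hc₀ : star c₀ * c₀ ≤ 1) (hc₁ : star c₁ * c₁ ≤ 1) :
    ‖f ((a₀ + a₁) * b₀ * (c₀ + c₁))‖ + ‖f ((a₀ - a₁) * b₁ * (c₀ - c₁))‖ ≤ 4 := by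
  have hI := f.norm_apply_star_mul_mul_le hb₀ (a₀ + a₁) (c₀ + c₁)
  have hJ := f.norm_apply_star_mul_mul_le hb₁ (a₀ - a₁) (c₀ - c₁)
  rw [(ha₀.add ha₁).star_eq] at hI
  rw [(ha₀.sub ha₁).star_eq] at hJ
  simp only [map_add, map_sub] at hI hJ
  grw [hI, hJ]
  exact norm_add_mul_norm_add_add_norm_sub_mul_norm_sub_le_four (𝕜 := ℂ)
    (f.norm_toPreGNS_le_one hf ha₀') (f.norm_toPreGNS_le_one hf ha₁')
    (f.norm_toPreGNS_le_one hf hc₀) (f.norm_toPreGNS_le_one hf hc₁)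

end PositiveLinearMap

end CStarAlgebra

theorem bilocal_le_two_sqrt_two_general
    {H : Type*} [NormedAddCommGroup H] [InnerProductSpace ℂ H] [CompleteSpace H]
    (A₀ A₁ B₀ B₁ C₀ C₁ : H →L[ℂ] H)
    (hA₀le : -1 ≤ A₀ ∧ A₀ ≤ 1) (hA₁le : -1 ≤ A₁ ∧ A₁ ≤ 1)
    (hB₀le : -1 ≤ B₀ ∧ B₀ ≤ 1) (hB₁le : -1 ≤ B₁ ∧ B₁ ≤ 1)
    (hC₀le : -1 ≤ C₀ ∧ C₀ ≤ 1) (hC₁le : -1 ≤ C₁ ∧ C₁ ≤ 1)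
    (τ : (H →L[ℂ] H) →ₗ[ℂ] ℂ)
    (hτpos : ∀ T : H →L[ℂ] H, 0 ≤ T → ∃ r : ℝ, 0 ≤ r ∧ τ T = (r : ℂ))
    (hτone : τ 1 = 1) :
    Real.sqrt ‖τ ((A₀ + A₁) * B₀ * (C₀ + C₁))‖ +
      Real.sqrt ‖τ ((A₀ - A₁) * B₁ * (C₀ - C₁))‖ ≤ 2 * Real.sqrt 2 := by
  let f : (H →L[ℂ] H) →ₚ[ℂ] ℂ := .mk₀ τ fun T hT => by
    obtain ⟨r, hr, hτT⟩ := hτpos T hT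
    exact hτT ▸ Complex.zero_le_real.2 hr
  have hcontr {X : H →L[ℂ] H} (hX : -1 ≤ X ∧ X ≤ 1) : star X * X ≤ 1 :=
    star_mul_self_le_one_of_neg_one_le_of_le_one hX.1 hX.2
  have hsum : ‖τ ((A₀ + A₁) * B₀ * (C₀ + C₁))‖ + ‖τ ((A₀ - A₁) * B₁ * (C₀ - C₁))‖ ≤ 4 :=
    f.norm_apply_add_mul_add_add_norm_apply_sub_mul_sub_le_four hτone
      (isSelfAdjoint_of_neg_one_le hA₀le.1) (isSelfAdjoint_of_neg_one_le hA₁le.1)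
      (hcontr hA₀le) (hcontr hA₁le) (hcontr hB₀le) (hcontr hB₁le) (hcontr hC₀le) (hcontr hC₁le)
  calc √‖τ ((A₀ + A₁) * B₀ * (C₀ + C₁))‖ + √‖τ ((A₀ - A₁) * B₁ * (C₀ - C₁))‖
      ≤ √(2 * 4) := by
        grw [Real.sqrt_add_sqrt_le_sqrt_two_mul_add (norm_nonneg _) (norm_nonneg _), hsum]
    _ = 2 * √2 := by
        rw [show (2 : ℝ) * 4 = 2 ^ 2 * 2 by norm_num, Real.sqrt_mul (by norm_num),
          Real.sqrt_sq zero_le_two]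

/-- Theorem 1 (bilocal inequality bound `2√2`) in the ternary mutually-commuting
von Neumann algebra model of entanglement swapping networks, stated on `B(H)`. -/
theorem bilocal_le_two_sqrt_two
    {H : Type*} [NormedAddCommGroup H] [InnerProductSpace ℂ H] [CompleteSpace H]
    (A₀ A₁ B₀ B₁ C₀ C₁ : H →L[ℂ] H)
    (hA₀ : IsSelfAdjoint A₀) (hA₁ : IsSelfAdjoint A₁)
    (hB₀ : IsSelfAdjoint B₀) (hB₁ : IsSelfAdjoint B₁)
    (hC₀ : IsSelfAdjoint C₀) (hC₁ : IsSelfAdjoint C₁)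
    (hA₀le : -1 ≤ A₀ ∧ A₀ ≤ 1) (hA₁le : -1 ≤ A₁ ∧ A₁ ≤ 1)
    (hB₀le : -1 ≤ B₀ ∧ B₀ ≤ 1) (hB₁le : -1 ≤ B₁ ∧ B₁ ≤ 1)
    (hC₀le : -1 ≤ C₀ ∧ C₀ ≤ 1) (hC₁le : -1 ≤ C₁ ∧ C₁ ≤ 1)
    (hAcomm : ∀ X ∈ ({A₀, A₁} : Set (H →L[ℂ] H)),
      ∀ Y ∈ ({B₀, B₁, C₀, C₁} : Set (H →L[ℂ] H)), Commute X Y)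
    (hBCcomm : ∀ X ∈ ({B₀, B₁} : Set (H →L[ℂ] H)),
      ∀ Y ∈ ({C₀, C₁} : Set (H →L[ℂ] H)), Commute X Y)
    (τ : (H →L[ℂ] H) →ₗ[ℂ] ℂ)
    (hτpos : ∀ T : H →L[ℂ] H, 0 ≤ T → ∃ r : ℝ, 0 ≤ r ∧ τ T = (r : ℂ))
    (hτone : τ 1 = 1)
    -- independence: τ factorizes on the von Neumann algebras (double commutants)
    -- generated by `A₀, A₁` and by `C₀, C₁`
    (hind : ∀ A ∈ Set.centralizer (Set.centralizer ({A₀, A₁} : Set (H →L[ℂ] H))),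
      ∀ C ∈ Set.centralizer (Set.centralizer ({C₀, C₁} : Set (H →L[ℂ] H))),
        τ (A * C) = τ A * τ C) :
    Real.sqrt ‖τ ((A₀ + A₁) * B₀ * (C₀ + C₁))‖ +
      Real.sqrt ‖τ ((A₀ - A₁) * B₁ * (C₀ - C₁))‖ ≤ 2 * Real.sqrt 2 :=
  bilocal_le_two_sqrt_two_general A₀ A₁ B₀ B₁ C₀ C₁ hA₀le hA₁le hB₀le hB₁le hC₀le hC₁le τ hτpos
    hτone
end

section
/- Let τ be a state on a unital C*-algebra and let A₀, A₁, C₀, C₁ be self-adjoint contractions, with each Aᵢ commuting with each Cⱼ, and assume the factorization τ(AC) = τ(A)τ(C) for A in the algebra generated by the A's and C in the algebra generated by the C's. Then √(τ((A₀+A₁)²(C₀+C₁)²)) + √(τ((A₀-A₁)²(C₀-C₁)²)) ≤ √(τ((A₀+A₁)²)+τ((A₀-A₁)²)) · √(τ((C₀+C₁)²)+τ((C₀-C₁)²)) ≤ √(2τ(A₀²+A₁²)) · √(2τ(C₀²+C₁²)) ≤ 4. -/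
section Aux
variable {M : Type*} [CStarAlgebra M] [PartialOrder M] [StarOrderedRing M]

private lemma aux_algebraMap_nonneg (r : ℝ) (hr : 0 ≤ r) : 0 ≤ algebraMap ℝ M r := by
  have : algebraMap ℝ M r = star (algebraMap ℝ M (Real.sqrt r)) * algebraMap ℝ M (Real.sqrt r) := by
    rw [← algebraMap_star_comm, star_trivial, ← map_mul, Real.mul_self_sqrt hr]
  rw [this]; exact star_mul_self_nonneg _

private lemma aux_sq_nonneg (a : M) (ha : IsSelfAdjoint a) : 0 ≤ a ^ 2 := by
  have := star_mul_self_nonneg a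
  rwa [ha.star_eq, ← sq] at this

private lemma aux_sq_le_one (a : M) (ha : IsSelfAdjoint a) (hn : ‖a‖ ≤ 1) : a ^ 2 ≤ 1 := by
  have hsa : IsSelfAdjoint (a ^ 2) := ha.pow 2
  have h1 : a ^ 2 ≤ algebraMap ℝ M ‖a ^ 2‖ := hsa.le_algebraMap_norm_self
  refine h1.trans ?_
  have hnorm : ‖a ^ 2‖ ≤ 1 := by
    calc ‖a ^ 2‖ = ‖a * a‖ := by rw [sq]
    _ ≤ ‖a‖ * ‖a‖ := norm_mul_le a a
    _ ≤ 1 * 1 := mul_le_mul hn hn (norm_nonneg a) zero_le_one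
    _ = 1 := one_mul 1
  have h0 : (0 : M) ≤ algebraMap ℝ M (1 - ‖a ^ 2‖) := aux_algebraMap_nonneg _ (by linarith)
  calc algebraMap ℝ M ‖a ^ 2‖
      ≤ algebraMap ℝ M ‖a ^ 2‖ + algebraMap ℝ M (1 - ‖a ^ 2‖) := le_add_of_nonneg_right h0
  _ = 1 := by rw [← map_add]; simp

end Aux

/-- Chain of estimates using Cauchy–Schwarz and the independence condition
`τ(AC) = τ(A)τ(C)`:
`√τ((A₀+A₁)²(C₀+C₁)²) + √τ((A₀-A₁)²(C₀-C₁)²)`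
`≤ √(τ((A₀+A₁)²)+τ((A₀-A₁)²))·√(τ((C₀+C₁)²)+τ((C₀-C₁)²))`
`≤ √(2τ(A₀²+A₁²))·√(2τ(C₀²+C₁²)) ≤ 4`. -/
theorem independence_cauchy_schwarz_chain
    {M : Type*} [CStarAlgebra M] [PartialOrder M] [StarOrderedRing M]
    (A₀ A₁ C₀ C₁ : M)
    (hA₀ : IsSelfAdjoint A₀) (hA₁ : IsSelfAdjoint A₁)
    (hC₀ : IsSelfAdjoint C₀) (hC₁ : IsSelfAdjoint C₁)
    (hA₀n : ‖A₀‖ ≤ 1) (hA₁n : ‖A₁‖ ≤ 1) (hC₀n : ‖C₀‖ ≤ 1) (hC₁n : ‖C₁‖ ≤ 1)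
    (hAC : ∀ X ∈ ({A₀, A₁} : Set M), ∀ Y ∈ ({C₀, C₁} : Set M), Commute X Y)
    (τ : M →ₗ[ℂ] ℂ)
    (hτpos : ∀ a : M, 0 ≤ a → ∃ r : ℝ, 0 ≤ r ∧ τ a = (r : ℂ))
    (hτone : τ 1 = 1)
    (hind : ∀ A ∈ Algebra.adjoin ℂ ({A₀, A₁} : Set M),
      ∀ C ∈ Algebra.adjoin ℂ ({C₀, C₁} : Set M), τ (A * C) = τ A * τ C) :
    Real.sqrt (τ ((A₀ + A₁) ^ 2 * (C₀ + C₁) ^ 2)).re +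
        Real.sqrt (τ ((A₀ - A₁) ^ 2 * (C₀ - C₁) ^ 2)).re
      ≤ Real.sqrt ((τ ((A₀ + A₁) ^ 2)).re + (τ ((A₀ - A₁) ^ 2)).re) *
          Real.sqrt ((τ ((C₀ + C₁) ^ 2)).re + (τ ((C₀ - C₁) ^ 2)).re) ∧
    Real.sqrt ((τ ((A₀ + A₁) ^ 2)).re + (τ ((A₀ - A₁) ^ 2)).re) *
        Real.sqrt ((τ ((C₀ + C₁) ^ 2)).re + (τ ((C₀ - C₁) ^ 2)).re)
      ≤ Real.sqrt (2 * (τ (A₀ ^ 2 + A₁ ^ 2)).re) *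
          Real.sqrt (2 * (τ (C₀ ^ 2 + C₁ ^ 2)).re) ∧
    Real.sqrt (2 * (τ (A₀ ^ 2 + A₁ ^ 2)).re) *
        Real.sqrt (2 * (τ (C₀ ^ 2 + C₁ ^ 2)).re) ≤ 4 := by
  -- real nonneg values on squares
  have hval : ∀ x : M, IsSelfAdjoint x →
      0 ≤ (τ (x ^ 2)).re ∧ τ (x ^ 2) = (((τ (x ^ 2)).re : ℝ) : ℂ) := by
    intro x hx
    obtain ⟨r, hr, hτr⟩ := hτpos _ (aux_sq_nonneg x hx)
    rw [hτr]; simp [hr]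
  -- bound ≤ 1 for contractions
  have hone : ∀ x : M, IsSelfAdjoint x → ‖x‖ ≤ 1 → (τ (x ^ 2)).re ≤ 1 := by
    intro x hx hn
    obtain ⟨r, hr, hτr⟩ := hτpos (1 - x ^ 2) (sub_nonneg.mpr (aux_sq_le_one x hx hn))
    have h := map_sub τ 1 (x ^ 2)
    rw [hτone, hτr] at h
    have : τ (x ^ 2) = 1 - (r : ℂ) := by linear_combination h
    rw [this]
    simp only [Complex.sub_re, Complex.one_re, Complex.ofReal_re]
    linarith
  -- adjoin memberships
  have hA0m : A₀ ∈ Algebra.adjoin ℂ ({A₀, A₁} : Set M) := Algebra.subset_adjoin (by simp)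
  have hA1m : A₁ ∈ Algebra.adjoin ℂ ({A₀, A₁} : Set M) := Algebra.subset_adjoin (by simp)
  have hC0m : C₀ ∈ Algebra.adjoin ℂ ({C₀, C₁} : Set M) := Algebra.subset_adjoin (by simp)
  have hC1m : C₁ ∈ Algebra.adjoin ℂ ({C₀, C₁} : Set M) := Algebra.subset_adjoin (by simp)
  -- abbreviations
  set pa := (τ ((A₀ + A₁) ^ 2)).re with hpa_def
  set ma := (τ ((A₀ - A₁) ^ 2)).re with hma_def
  set pc := (τ ((C₀ + C₁) ^ 2)).re with hpc_def
  set mc := (τ ((C₀ - C₁) ^ 2)).re with hmc_def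
  obtain ⟨hpa0, hpaτ⟩ := hval _ (hA₀.add hA₁)
  obtain ⟨hma0, hmaτ⟩ := hval _ (hA₀.sub hA₁)
  obtain ⟨hpc0, hpcτ⟩ := hval _ (hC₀.add hC₁)
  obtain ⟨hmc0, hmcτ⟩ := hval _ (hC₀.sub hC₁)
  -- mixed terms factor
  have hmix1 : (τ ((A₀ + A₁) ^ 2 * (C₀ + C₁) ^ 2)).re = pa * pc := by
    rw [hind _ (pow_mem (add_mem hA0m hA1m) 2) _ (pow_mem (add_mem hC0m hC1m) 2),
      hpaτ, hpcτ, ← Complex.ofReal_mul]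
    simp [hpa_def, hpc_def]
  have hmix2 : (τ ((A₀ - A₁) ^ 2 * (C₀ - C₁) ^ 2)).re = ma * mc := by
    rw [hind _ (pow_mem (sub_mem hA0m hA1m) 2) _ (pow_mem (sub_mem hC0m hC1m) 2),
      hmaτ, hmcτ, ← Complex.ofReal_mul]
    simp [hma_def, hmc_def]
  -- parallelogram identities
  have hparA : pa + ma = 2 * (τ (A₀ ^ 2 + A₁ ^ 2)).re := by
    have hid : (A₀ + A₁) ^ 2 + (A₀ - A₁) ^ 2 = (A₀ ^ 2 + A₁ ^ 2) + (A₀ ^ 2 + A₁ ^ 2) := by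
      noncomm_ring
    have h2 : τ ((A₀ + A₁) ^ 2) + τ ((A₀ - A₁) ^ 2)
        = τ (A₀ ^ 2 + A₁ ^ 2) + τ (A₀ ^ 2 + A₁ ^ 2) := by
      rw [← map_add, ← map_add, hid]
    have := congrArg Complex.re h2
    simp only [Complex.add_re] at this
    linarith
  have hparC : pc + mc = 2 * (τ (C₀ ^ 2 + C₁ ^ 2)).re := by
    have hid : (C₀ + C₁) ^ 2 + (C₀ - C₁) ^ 2 = (C₀ ^ 2 + C₁ ^ 2) + (C₀ ^ 2 + C₁ ^ 2) := by
      noncomm_ring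
    have h2 : τ ((C₀ + C₁) ^ 2) + τ ((C₀ - C₁) ^ 2)
        = τ (C₀ ^ 2 + C₁ ^ 2) + τ (C₀ ^ 2 + C₁ ^ 2) := by
      rw [← map_add, ← map_add, hid]
    have := congrArg Complex.re h2
    simp only [Complex.add_re] at this
    linarith
  refine ⟨?_, ?_, ?_⟩
  · -- Cauchy–Schwarz step
    rw [hmix1, hmix2, Real.sqrt_mul hpa0, Real.sqrt_mul hma0,
      ← Real.sqrt_mul (by linarith : (0:ℝ) ≤ pa + ma)]
    have key : (Real.sqrt pa * Real.sqrt pc + Real.sqrt ma * Real.sqrt mc) ^ 2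
        ≤ (pa + ma) * (pc + mc) := by
      nlinarith [Real.sq_sqrt hpa0, Real.sq_sqrt hma0, Real.sq_sqrt hpc0, Real.sq_sqrt hmc0,
        sq_nonneg (Real.sqrt pa * Real.sqrt mc - Real.sqrt ma * Real.sqrt pc),
        Real.sqrt_nonneg pa, Real.sqrt_nonneg ma, Real.sqrt_nonneg pc, Real.sqrt_nonneg mc]
    calc Real.sqrt pa * Real.sqrt pc + Real.sqrt ma * Real.sqrt mc
        = Real.sqrt ((Real.sqrt pa * Real.sqrt pc + Real.sqrt ma * Real.sqrt mc) ^ 2) :=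
          (Real.sqrt_sq (by positivity)).symm
      _ ≤ Real.sqrt ((pa + ma) * (pc + mc)) := Real.sqrt_le_sqrt key
  · rw [← hparA, ← hparC]
  · have hsA : 2 * (τ (A₀ ^ 2 + A₁ ^ 2)).re ≤ 4 := by
      have h := congrArg Complex.re (map_add τ (A₀ ^ 2) (A₁ ^ 2))
      simp only [Complex.add_re] at h
      have h0 := hone A₀ hA₀ hA₀n
      have h1 := hone A₁ hA₁ hA₁n
      linarith
    have hsC : 2 * (τ (C₀ ^ 2 + C₁ ^ 2)).re ≤ 4 := by
      have h := congrArg Complex.re (map_add τ (C₀ ^ 2) (C₁ ^ 2))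
      simp only [Complex.add_re] at h
      have h0 := hone C₀ hC₀ hC₀n
      have h1 := hone C₁ hC₁ hC₁n
      linarith
    have h4 : Real.sqrt 4 = 2 := by
      rw [show (4:ℝ) = 2 ^ 2 by norm_num, Real.sqrt_sq (by norm_num)]
    calc Real.sqrt (2 * (τ (A₀ ^ 2 + A₁ ^ 2)).re) * Real.sqrt (2 * (τ (C₀ ^ 2 + C₁ ^ 2)).re)
        ≤ 2 * 2 := mul_le_mul ((Real.sqrt_le_sqrt hsA).trans_eq h4)
            ((Real.sqrt_le_sqrt hsC).trans_eq h4) (Real.sqrt_nonneg _) (by norm_num)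
      _ = 4 := by norm_num
end
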